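/- arXiv:2510.24947 — 3 statements merged into one kernel-verified Lean document; each statement's English description precedes it below -/
import Mathlib

section
/- In the group G = ⟨x, y | x² = y²⟩, the element [x, y] = xyx⁻¹y⁻¹ satisfies the generalized torsion relation (x[x,y]x⁻¹)(xy[x,y]y⁻¹x⁻¹)[x,y](y[x,y]y⁻¹) = 1. -/
def sqRel : Set (FreeGroup (Fin 2)) :=
  {FreeGroup.of 0 ^ 2 * (FreeGroup.of 1 ^ 2)⁻¹}

def x7 : PresentedGroup sqRel := PresentedGroup.of 0
def y7 : PresentedGroup sqRel := PresentedGroup.of 1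

/-! In every group the word freely reduces to `⁅x², y²⁆`, which is trivial once `x² = y²`. -/

open scoped commutatorElement

theorem commutator_conj_product_eq_commutator_sq {G : Type*} [Group G] (a b : G) :
    (a * ⁅a, b⁆ * a⁻¹) * ((a * b) * ⁅a, b⁆ * (a * b)⁻¹) * ⁅a, b⁆ * (b * ⁅a, b⁆ * b⁻¹) =
      ⁅a ^ 2, b ^ 2⁆ := by
  simp only [commutatorElement_def, sq]
  group

theorem x7_sq_eq_y7_sq : x7 ^ 2 = y7 ^ 2 :=
  mul_inv_eq_one.mp (PresentedGroup.one_of_mem (Set.mem_singleton _))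

theorem stmt7 :
    (x7 * (x7 * y7 * x7⁻¹ * y7⁻¹) * x7⁻¹) *
    ((x7 * y7) * (x7 * y7 * x7⁻¹ * y7⁻¹) * (x7 * y7)⁻¹) *
    (x7 * y7 * x7⁻¹ * y7⁻¹) *
    (y7 * (x7 * y7 * x7⁻¹ * y7⁻¹) * y7⁻¹) = 1 := by
  refine (commutator_conj_product_eq_commutator_sq x7 y7).trans ?_
  rw [x7_sq_eq_y7_sq, commutatorElement_self]
end

section
/- In any group, if x and y do not commute but x^p = y^q for some integers p, q with |p|, |q| > 1, then the group is not bi-orderable. -/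
def BiOrderable (G : Type*) [Group G] : Prop :=
  ∃ r : G → G → Prop, IsStrictTotalOrder G r ∧
    (∀ a b c : G, r a b → r (c * a) (c * b)) ∧
    (∀ a b c : G, r a b → r (a * c) (b * c))

section Aux

variable {G : Type*} [Group G] (r : G → G → Prop)

lemma aux_pow_lt (hsto : IsStrictTotalOrder G r)
    (hl : ∀ a b c : G, r a b → r (c * a) (c * b))
    (hr : ∀ a b c : G, r a b → r (a * c) (b * c))
    {a b : G} (hab : r a b) : ∀ n : ℕ, 0 < n → r (a ^ n) (b ^ n) := by
  intro n hn
  induction n with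
  | zero => exact absurd hn (lt_irrefl 0)
  | succ m ih =>
    rcases Nat.eq_zero_or_pos m with hm | hm
    · subst hm; simpa using hab
    · have h1 : r (a ^ m * a) (b ^ m * a) := hr _ _ _ (ih hm)
      have h2 : r (b ^ m * a) (b ^ m * b) := hl _ _ _ hab
      have h3 := hsto.trans _ _ _ h1 h2
      simpa [pow_succ] using h3

lemma aux_inj (hsto : IsStrictTotalOrder G r)
    (hl : ∀ a b c : G, r a b → r (c * a) (c * b))
    (hr : ∀ a b c : G, r a b → r (a * c) (b * c))
    {a b : G} {q : ℤ} (hq : q ≠ 0) (h : a ^ q = b ^ q) : a = b := by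
  have key : ∀ n : ℕ, 0 < n → a ^ (n : ℤ) = b ^ (n : ℤ) → a = b := by
    intro n hn hpow
    rcases (or_iff_not_imp_left.2 fun h1 => or_iff_not_imp_right.2 fun h2 => hsto.trichotomous a b h1 h2 : r a b ∨ a = b ∨ r b a) with hab | heq | hba
    · have h4 := aux_pow_lt r hsto hl hr hab n hn
      rw [← zpow_natCast a, ← zpow_natCast b, hpow] at h4
      exact absurd h4 (hsto.irrefl _)
    · exact heq
    · have h4 := aux_pow_lt r hsto hl hr hba n hn
      rw [← zpow_natCast a, ← zpow_natCast b, hpow] at h4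
      exact absurd h4 (hsto.irrefl _)
  rcases lt_or_gt_of_ne hq with hneg | hpos
  · have h' : a ^ (-q) = b ^ (-q) := by rw [zpow_neg, zpow_neg, h]
    obtain ⟨n, hn⟩ : ∃ n : ℕ, -q = (n : ℤ) := ⟨(-q).toNat, by omega⟩
    refine key n (by omega) ?_
    rw [← hn]; exact h'
  · obtain ⟨n, hn⟩ : ∃ n : ℕ, q = (n : ℤ) := ⟨q.toNat, by omega⟩
    refine key n (by omega) ?_
    rw [← hn]; exact h

end Aux

theorem stmt9 {G : Type*} [Group G] (x y : G) (p q : ℤ)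
    (hp : 1 < |p|) (hq : 1 < |q|) (hxy : x * y ≠ y * x) (h : x ^ p = y ^ q) :
    ¬ BiOrderable G := by
  rintro ⟨r, hsto, hl, hr⟩
  have hc : x * y ^ q * x⁻¹ = y ^ q := by
    rw [← h]; group
  have hconj : (x * y * x⁻¹) ^ q = y ^ q := by
    rw [conj_zpow, hc]
  have hq0 : q ≠ 0 := by rintro rfl; simp at hq
  have heq := aux_inj r hsto hl hr hq0 hconj
  apply hxy
  have h2 : x * y * x⁻¹ * x = y * x := by rw [heq]
  simpa [mul_assoc] using h2
end

section
/- Let M be a group, P ⊴ M a normal subgroup, and D ≤ M a subgroup such that every element of M/P has a representative in D (i.e., D·P = M). If for every β ∈ D \ P the subgroup ⟨D ∩ P, β⟩ is not bi-orderable, then every subgroup H of M with P ⊊ H ⊆ M is not bi-orderable. -/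
theorem BiOrderable.of_injective {G G' : Type*} [Group G] [Group G'] (f : G →* G')
    (hf : Function.Injective f) (h : BiOrderable G') : BiOrderable G := by
  obtain ⟨r, hsto, hl, hr⟩ := h
  haveI := hsto
  refine ⟨fun a b => r (f a) (f b), ?_, fun a b c hab => ?_, fun a b c hab => ?_⟩
  · exact { trichotomous := fun a b => by
              intro h1 h2
              rcases trichotomous_of r (f a) (f b) with h | h | h
              exacts [absurd h h1, hf h, absurd h h2],
            irrefl := fun a => irrefl_of r (f a),
            trans := fun a b c => trans_of r }
  · simpa using hl _ _ (f c) hab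
  · simpa using hr _ _ (f c) hab

theorem stmt19 {M : Type*} [Group M] (P D : Subgroup M) (hP : P.Normal)
    (hDP : ∀ m : M, ∃ d ∈ D, ∃ p ∈ P, m = d * p)
    (hbad : ∀ β : M, β ∈ D → β ∉ P →
      ¬ BiOrderable (Subgroup.closure (((D ⊓ P : Subgroup M) : Set M) ∪ {β})))
    (H : Subgroup M) (hH : P < H) : ¬ BiOrderable H := by
  intro hBO
  -- pick h ∈ H \ P
  obtain ⟨h, hhH, hhP⟩ := SetLike.exists_of_lt hH
  obtain ⟨d, hdD, p, hpP, hdp⟩ := hDP h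
  have hdH : d ∈ H := by
    have : d = h * p⁻¹ := by rw [hdp]; group
    rw [this]
    exact H.mul_mem hhH (H.inv_mem (hH.le hpP))
  have hdP : d ∉ P := fun hd => hhP (by rw [hdp]; exact P.mul_mem hd hpP)
  apply hbad d hdD hdP
  have hle : Subgroup.closure (((D ⊓ P : Subgroup M) : Set M) ∪ {d}) ≤ H := by
    apply Subgroup.closure_le _ |>.mpr
    rintro x (hx | rfl)
    · exact hH.le hx.2
    · exact hdH
  exact BiOrderable.of_injective (Subgroup.inclusion hle)
    (Subgroup.inclusion_injective hle) hBO
end
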